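/- arXiv:2506.07306 — 3 statements merged into one kernel-verified Lean document; each statement's English description precedes it below -/
import Mathlib

section
/- Let u, v, w be permutations in S_n. If rk_w(a,b) = min(rk_u(a,b), rk_v(a,b)) for all (a,b) in [0,n] × [0,n], then w is the least upper bound (join) of u and v in Bruhat order. -/
/-- Coxeter length of a permutation of `Fin n`: number of inversions. -/
def len {n : ℕ} (w : Equiv.Perm (Fin n)) : ℕ :=
  (Finset.univ.filter (fun p : Fin n × Fin n => p.1 < p.2 ∧ w p.2 < w p.1)).card

/-- The longest permutation `w₀` of `S_n` (reversal). -/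
def longest (n : ℕ) : Equiv.Perm (Fin n) := Fin.revPerm

/-- The simple transposition `s_i` (1-based index `i ∈ [n-1]`), exchanging
positions `i` and `i+1` of the one-line notation. -/
def simpleRefl (n i : ℕ) : Equiv.Perm (Fin n) :=
  if h : 1 ≤ i ∧ i < n then Equiv.swap ⟨i - 1, by omega⟩ ⟨i, by omega⟩ else 1

/-- The Hecke (Demazure) up-operator: `w * τ_i = w` if `ℓ(w s_i) < ℓ(w)`, else `w s_i`. -/
def heckeStar {n : ℕ} (w : Equiv.Perm (Fin n)) (i : ℕ) : Equiv.Perm (Fin n) :=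
  if len (w * simpleRefl n i) < len w then w else w * simpleRefl n i

/-- The down-operator: `w □ τ_i = w` if `ℓ(w s_i) > ℓ(w)`, else `w s_i`. -/
def heckeSq {n : ℕ} (w : Equiv.Perm (Fin n)) (i : ℕ) : Equiv.Perm (Fin n) :=
  if len w < len (w * simpleRefl n i) then w else w * simpleRefl n i

/-- The rank function of a permutation: `rk_w(a,b) = #{i ∈ [a] : w(i) ∈ [b]}`
(here encoded 0-based: positions `m` with `m < a` and values `w(m) < b`). -/
def rk {n : ℕ} (w : Equiv.Perm (Fin n)) (a b : ℕ) : ℕ :=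
  (Finset.univ.filter (fun m : Fin n => (m : ℕ) < a ∧ (w m : ℕ) < b)).card

/-- Bruhat order on `S_n`: the reflexive-transitive closure of the covering
relation `u ⋖ u t` with `t` a transposition and `ℓ(ut) = ℓ(u) + 1`. -/
def bruhatLE {n : ℕ} (u v : Equiv.Perm (Fin n)) : Prop :=
  Relation.ReflTransGen
    (fun x y => (∃ t : Equiv.Perm (Fin n), t.IsSwap ∧ y = x * t) ∧ len y = len x + 1) u v

open Finset Equiv

namespace BruhatAux

variable {n : ℕ}

/-- middle-segment rank count -/
def rkIoo (z : Equiv.Perm (Fin n)) (i a b : ℕ) : ℕ :=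
  (Finset.univ.filter (fun m : Fin n => i < (m : ℕ) ∧ (m : ℕ) < a ∧ (z m : ℕ) < b)).card

lemma rk_split (z : Equiv.Perm (Fin n)) (i : Fin n) (a b : ℕ) (h : (i : ℕ) < a) :
    rk z a b = rk z i b + (if (z i : ℕ) < b then 1 else 0) + rkIoo z i a b := by
  classical
  unfold rk rkIoo
  rw [Finset.card_filter, Finset.card_filter, Finset.card_filter]
  have : (if (z i : ℕ) < b then 1 else 0)
      = ∑ m : Fin n, (if m = i ∧ (z m : ℕ) < b then 1 else 0) := by
    rw [Finset.sum_eq_single i]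
    · simp
    · intro m _ hm; simp [hm]
    · simp
  rw [this, ← Finset.sum_add_distrib, ← Finset.sum_add_distrib]
  apply Finset.sum_congr rfl
  intro m _
  simp only [Fin.ext_iff]
  split_ifs <;> omega

lemma rk_congr {u w : Equiv.Perm (Fin n)} (a b : ℕ)
    (h : ∀ m : Fin n, (m : ℕ) < a → u m = w m) : rk u a b = rk w a b := by
  unfold rk
  congr 1
  apply Finset.filter_congr
  intro m _
  by_cases hm : (m : ℕ) < a
  · rw [h m hm]
  · simp [hm]

lemma rkIoo_congr {u w : Equiv.Perm (Fin n)} {i a b b' : ℕ}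
    (h : ∀ m : Fin n, i < (m : ℕ) → (m : ℕ) < a → ((u m : ℕ) < b ↔ (w m : ℕ) < b')) :
    rkIoo u i a b = rkIoo w i a b' := by
  unfold rkIoo
  congr 1
  apply Finset.filter_congr
  intro m _
  by_cases h1 : i < (m : ℕ)
  · by_cases h2 : (m : ℕ) < a
    · simp only [h1, h2, true_and]; exact h m h1 h2
    · simp [h2]
  · simp [h1]

lemma rkIoo_mono_b {z : Equiv.Perm (Fin n)} {i a b b' : ℕ} (h : b ≤ b') :
    rkIoo z i a b ≤ rkIoo z i a b' := by
  apply Finset.card_le_card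
  intro m hm
  simp only [Finset.mem_filter] at hm ⊢
  exact ⟨hm.1, hm.2.1, hm.2.2.1, lt_of_lt_of_le hm.2.2.2 h⟩

lemma rk_succ (z : Equiv.Perm (Fin n)) (i : Fin n) (b : ℕ) :
    rk z ((i : ℕ) + 1) b = rk z i b + (if (z i : ℕ) < b then 1 else 0) := by
  have h := rk_split z i ((i : ℕ) + 1) b (Nat.lt_succ_self _)
  have h2 : rkIoo z i ((i : ℕ) + 1) b = 0 := by
    unfold rkIoo
    rw [Finset.card_eq_zero, Finset.filter_eq_empty_iff]
    intro m _ hm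
    omega
  omega

/-- rank functions agree on the grid implies equal permutations -/
lemma rk_inj {u w : Equiv.Perm (Fin n)}
    (h : ∀ a b : ℕ, a ≤ n → b ≤ n → rk u a b = rk w a b) : u = w := by
  have key : ∀ k : ℕ, ∀ m : Fin n, (m : ℕ) = k → u m = w m := by
    intro k
    induction k using Nat.strong_induction_on with
    | _ k IH =>
      intro m hm
      have hpre : ∀ m' : Fin n, (m' : ℕ) < (m : ℕ) → u m' = w m' := by
        intro m' hm'
        exact IH (m' : ℕ) (by omega) m' rfl
      have hup : ∀ b : ℕ, b ≤ n →
          ((if (u m : ℕ) < b then 1 else 0) : ℕ) = (if (w m : ℕ) < b then 1 else 0) := by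
        intro b hb
        have h1 := rk_succ u m b
        have h2 := rk_succ w m b
        have h3 : rk u (m : ℕ) b = rk w (m : ℕ) b := rk_congr _ _ hpre
        have h4 : rk u ((m : ℕ) + 1) b = rk w ((m : ℕ) + 1) b :=
          h _ _ (by omega) hb
        omega
      have hb1 := hup ((u m : ℕ) + 1) (by have := (u m).isLt; omega)
      have hb2 := hup ((w m : ℕ) + 1) (by have := (w m).isLt; omega)
      have : (u m : ℕ) = (w m : ℕ) := by
        have e1 := hb1; have e2 := hb2
        split_ifs at e1 e2 <;> omega
      exact Fin.ext this
  exact Equiv.ext (fun m => key (m : ℕ) m rfl)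

/-- rank is unchanged under a swap outside the affected columns -/
lemma rk_mul_swap_out (x : Equiv.Perm (Fin n)) {p q : Fin n} (hpq : p < q) {a : ℕ} (b : ℕ)
    (h : a ≤ (p : ℕ) ∨ (q : ℕ) < a) :
    rk (x * Equiv.swap p q) a b = rk x a b := by
  have hfix : ∀ m : Fin n, m ≠ p → m ≠ q → (x * Equiv.swap p q) m = x m := by
    intro m h1 h2
    rw [Equiv.Perm.mul_apply, Equiv.swap_apply_of_ne_of_ne h1 h2]
  rcases h with h | h
  · apply rk_congr
    intro m hm
    have h1 : m ≠ p := fun e => by subst e; omega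
    have h2 : m ≠ q := fun e => by subst e; have := hpq; rw [Fin.lt_def] at this; omega
    exact hfix m h1 h2
  · -- q < a : split at q and p
    have hpa : (p : ℕ) < a := by rw [Fin.lt_def] at hpq; omega
    have hqa : (q : ℕ) < a := h
    set y := x * Equiv.swap p q with hy
    have hyp : y p = x q := by rw [hy, Equiv.Perm.mul_apply, Equiv.swap_apply_left]
    have hyq : y q = x p := by rw [hy, Equiv.Perm.mul_apply, Equiv.swap_apply_right]
    have s1 := rk_split y q a b hqa
    have s2 := rk_split x q a b hqa
    have s3 := rk_split y p (q : ℕ) b (by rw [Fin.lt_def] at hpq; omega)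
    have s4 := rk_split x p (q : ℕ) b (by rw [Fin.lt_def] at hpq; omega)
    have e1 : rk y (p : ℕ) b = rk x (p : ℕ) b := by
      apply rk_congr
      intro m hm
      refine hfix m (fun e => by subst e; omega) (fun e => ?_)
      subst e; rw [Fin.lt_def] at hpq; omega
    have e2 : rkIoo y (p : ℕ) (q : ℕ) b = rkIoo x (p : ℕ) (q : ℕ) b := by
      apply rkIoo_congr
      intro m h1 h2
      rw [hfix m (fun e => by subst e; omega) (fun e => by subst e; omega)]
    have e3 : rkIoo y (q : ℕ) a b = rkIoo x (q : ℕ) a b := by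
      apply rkIoo_congr
      intro m h1 h2
      rw [hfix m (fun e => by subst e; rw [Fin.lt_def] at hpq; omega)
        (fun e => by subst e; omega)]
    rw [hyp] at s3
    rw [hyq] at s1
    omega

/-- rank identity under a swap in the affected columns -/
lemma rk_mul_swap_mid (x : Equiv.Perm (Fin n)) {p q : Fin n} (hpq : p < q) {a : ℕ} (b : ℕ)
    (h1 : (p : ℕ) < a) (h2 : a ≤ (q : ℕ)) :
    rk (x * Equiv.swap p q) a b + (if (x p : ℕ) < b then 1 else 0)
      = rk x a b + (if (x q : ℕ) < b then 1 else 0) := by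
  have hfix : ∀ m : Fin n, m ≠ p → m ≠ q → (x * Equiv.swap p q) m = x m := by
    intro m hh1 hh2
    rw [Equiv.Perm.mul_apply, Equiv.swap_apply_of_ne_of_ne hh1 hh2]
  set y := x * Equiv.swap p q with hy
  have hyp : y p = x q := by rw [hy, Equiv.Perm.mul_apply, Equiv.swap_apply_left]
  have s1 := rk_split y p a b h1
  have s2 := rk_split x p a b h1
  have e1 : rk y (p : ℕ) b = rk x (p : ℕ) b := by
    apply rk_congr
    intro m hm
    refine hfix m (fun e => by subst e; omega) (fun e => ?_)
    subst e; rw [Fin.lt_def] at hpq; omega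
  have e2 : rkIoo y (p : ℕ) a b = rkIoo x (p : ℕ) a b := by
    apply rkIoo_congr
    intro m hh1 hh2
    rw [hfix m (fun e => by subst e; omega) (fun e => by subst e; omega)]
  rw [hyp] at s1
  omega

/-- multiplying by an increasing swap lowers ranks -/
lemma rk_mul_swap_le (x : Equiv.Perm (Fin n)) {p q : Fin n} (hpq : p < q)
    (hv : (x p : ℕ) < (x q : ℕ)) (a b : ℕ) :
    rk (x * Equiv.swap p q) a b ≤ rk x a b := by
  by_cases h1 : (p : ℕ) < a
  · by_cases h2 : a ≤ (q : ℕ)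
    · have := rk_mul_swap_mid x hpq b h1 h2
      by_cases h3 : (x q : ℕ) < b
      · have h4 : (x p : ℕ) < b := by omega
        simp only [if_pos h3, if_pos h4] at this
        omega
      · split_ifs at this <;> omega
    · rw [rk_mul_swap_out x hpq b (Or.inr (by omega))]
  · rw [rk_mul_swap_out x hpq b (Or.inl (by omega))]

/-- inversion set -/
def Invs (z : Equiv.Perm (Fin n)) : Finset (Fin n × Fin n) :=
  Finset.univ.filter (fun e : Fin n × Fin n => e.1 < e.2 ∧ z e.2 < z e.1)

lemma len_eq_card_invs (z : Equiv.Perm (Fin n)) : len z = (Invs z).card := rfl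

lemma mem_invs {z : Equiv.Perm (Fin n)} {e : Fin n × Fin n} :
    e ∈ Invs z ↔ e.1 < e.2 ∧ z e.2 < z e.1 := by
  simp [Invs]

/-- the master formula: `ℓ(xσ) + 2|Inv(x) ∩ Inv(σ)| = ℓ(x) + ℓ(σ)` for a swap `σ`. -/
lemma len_mul_swap_formula (x : Equiv.Perm (Fin n)) {p q : Fin n} (hpq : p ≠ q) :
    len (x * Equiv.swap p q) + 2 * ((Invs x ∩ Invs (Equiv.swap p q)).card)
      = len x + len (Equiv.swap p q) := by
  classical
  set σ := Equiv.swap p q with hσ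
  have hσσ : ∀ a : Fin n, σ (σ a) = a := fun a => Equiv.swap_apply_self p q a
  have hinj : ∀ a b : Fin n, σ a = σ b → a = b := fun a b h => σ.injective h
  set g : Fin n × Fin n → Fin n × Fin n :=
    fun e => if σ e.1 < σ e.2 then (σ e.1, σ e.2) else (σ e.2, σ e.1) with hg
  have hgfst : ∀ e : Fin n × Fin n, e.1 < e.2 → (g e).1 < (g e).2 := by
    intro e he
    rw [hg]
    by_cases h : σ e.1 < σ e.2
    · simp [h]
    · have hne : σ e.1 ≠ σ e.2 := fun hc => (ne_of_lt he) (hinj _ _ hc)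
      have : σ e.2 < σ e.1 := lt_of_le_of_ne (not_lt.mp h) (Ne.symm hne)
      simp [h, this]
  have hgg : ∀ e : Fin n × Fin n, e.1 < e.2 → g (g e) = e := by
    intro e he
    by_cases h : σ e.1 < σ e.2
    · have hge : g e = (σ e.1, σ e.2) := by rw [hg]; simp [h]
      have hcond : σ (σ e.1) < σ (σ e.2) := by rw [hσσ, hσσ]; exact he
      rw [hge, hg]
      simp only [hcond, if_pos, hσσ]
      rw [if_pos he]
    · have hne : σ e.1 ≠ σ e.2 := fun hc => (ne_of_lt he) (hinj _ _ hc)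
      have h' : σ e.2 < σ e.1 := lt_of_le_of_ne (not_lt.mp h) (Ne.symm hne)
      have hge : g e = (σ e.2, σ e.1) := by rw [hg]; simp [h]
      have hcond : ¬ (σ (σ e.2) < σ (σ e.1)) := by rw [hσσ, hσσ]; exact not_lt.mpr (le_of_lt he)
      rw [hge, hg]
      simp only [hcond, ite_false, hσσ]
      rw [if_neg (not_lt.mpr (le_of_lt he))]
  have hgS : ∀ e : Fin n × Fin n, e.1 < e.2 → (e ∈ Invs σ ↔ g e ∈ Invs σ) := by
    intro e he
    rw [hg]
    by_cases h : σ e.1 < σ e.2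
    · simp only [h, if_pos]
      rw [mem_invs, mem_invs]
      constructor
      · rintro ⟨-, h2⟩; exact absurd h (not_lt.mpr (le_of_lt h2))
      · rintro ⟨-, h2⟩
        rw [hσσ, hσσ] at h2
        exact absurd he (not_lt.mpr (le_of_lt h2))
    · have hne : σ e.1 ≠ σ e.2 := fun hc => (ne_of_lt he) (hinj _ _ hc)
      have h' : σ e.2 < σ e.1 := lt_of_le_of_ne (not_lt.mp h) (Ne.symm hne)
      simp only [h, ite_false]
      rw [mem_invs, mem_invs]
      simp only [hσσ]
      exact ⟨fun _ => ⟨h', he⟩, fun _ => ⟨he, h'⟩⟩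
  have hgB : ∀ e : Fin n × Fin n, e.1 < e.2 →
      (e ∈ Invs (x * σ) ↔ (if e ∈ Invs σ then g e ∉ Invs x else g e ∈ Invs x)) := by
    intro e he
    have hmul : ∀ a : Fin n, (x * σ) a = x (σ a) := fun a => rfl
    by_cases h : σ e.1 < σ e.2
    · have hS : e ∉ Invs σ := by
        rw [mem_invs]
        rintro ⟨-, h2⟩; exact absurd h (not_lt.mpr (le_of_lt h2))
      simp only [hS, if_neg, ite_false]
      rw [mem_invs, mem_invs, hg]
      simp only [h, if_pos]
      simp [hmul, he]
    · have hne : σ e.1 ≠ σ e.2 := fun hc => (ne_of_lt he) (hinj _ _ hc)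
      have h' : σ e.2 < σ e.1 := lt_of_le_of_ne (not_lt.mp h) (Ne.symm hne)
      have hS : e ∈ Invs σ := mem_invs.mpr ⟨he, h'⟩
      simp only [hS, if_pos, ite_true]
      rw [mem_invs, mem_invs, hg]
      simp only [h, ite_false]
      simp only [hmul, he, true_and, h', not_and, not_lt]
      have hvne : x (σ e.2) ≠ x (σ e.1) := fun hc => (ne_of_lt h') (x.injective hc)
      exact ⟨fun h2 => le_of_lt h2, fun h2 => lt_of_le_of_ne h2 hvne⟩
  -- cardinalities
  have hsub : ∀ (z : Equiv.Perm (Fin n)) (e : Fin n × Fin n), e ∈ Invs z → e.1 < e.2 := by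
    intro z e he; exact (mem_invs.mp he).1
  have E1 : ((Invs (x * σ)) \ (Invs σ)).card = ((Invs x) \ (Invs σ)).card := by
    apply Finset.card_bij' (fun e _ => g e) (fun e _ => g e)
    · intro e he
      rw [Finset.mem_sdiff] at he ⊢
      have he1 := hsub _ _ he.1
      constructor
      · have := (hgB e he1).mp he.1
        rw [if_neg he.2] at this
        exact this
      · intro hc; exact he.2 ((hgS e he1).mpr hc)
    · intro e he
      rw [Finset.mem_sdiff] at he ⊢
      have he1 := hsub _ _ he.1
      have hgS' : g e ∉ Invs σ := fun hc => he.2 ((hgS e he1).mpr hc)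
      constructor
      · rw [hgB (g e) (hgfst e he1), if_neg hgS', hgg e he1]
        exact he.1
      · exact hgS'
    · intro e he
      rw [Finset.mem_sdiff] at he
      exact hgg e (hsub _ _ he.1)
    · intro e he
      rw [Finset.mem_sdiff] at he
      exact hgg e (hsub _ _ he.1)
  have E2 : ((Invs (x * σ)) ∩ (Invs σ)).card = ((Invs σ) \ (Invs x)).card := by
    apply Finset.card_bij' (fun e _ => g e) (fun e _ => g e)
    · intro e he
      rw [Finset.mem_inter] at he
      rw [Finset.mem_sdiff]
      have he1 := hsub _ _ he.1
      refine ⟨(hgS e he1).mp he.2, ?_⟩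
      have := (hgB e he1).mp he.1
      rw [if_pos he.2] at this
      exact this
    · intro e he
      rw [Finset.mem_sdiff] at he
      rw [Finset.mem_inter]
      have he1 := hsub _ _ he.1
      have hgS' : g e ∈ Invs σ := (hgS e he1).mp he.1
      constructor
      · rw [hgB (g e) (hgfst e he1), if_pos hgS', hgg e he1]
        exact he.2
      · exact hgS'
    · intro e he
      rw [Finset.mem_inter] at he
      exact hgg e (hsub _ _ he.1)
    · intro e he
      rw [Finset.mem_sdiff] at he
      exact hgg e (hsub _ _ he.1)
  have d1 : ((Invs (x * σ)) ∩ (Invs σ)).card + ((Invs (x * σ)) \ (Invs σ)).card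
      = (Invs (x * σ)).card := Finset.card_inter_add_card_sdiff _ _
  have d2 : ((Invs x) ∩ (Invs σ)).card + ((Invs x) \ (Invs σ)).card
      = (Invs x).card := Finset.card_inter_add_card_sdiff _ _
  have d3 : ((Invs σ) ∩ (Invs x)).card + ((Invs σ) \ (Invs x)).card
      = (Invs σ).card := Finset.card_inter_add_card_sdiff _ _
  have d4 : ((Invs σ) ∩ (Invs x)).card = ((Invs x) ∩ (Invs σ)).card := by
    rw [Finset.inter_comm]
  rw [len_eq_card_invs, len_eq_card_invs, len_eq_card_invs]
  omega

lemma mem_invs_swap {p q : Fin n} (hpq : p < q) {e : Fin n × Fin n} :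
    e ∈ Invs (Equiv.swap p q) ↔
      (e = (p, q)) ∨ (e.1 = p ∧ p < e.2 ∧ e.2 < q) ∨ (p < e.1 ∧ e.1 < q ∧ e.2 = q) := by
  rw [mem_invs]
  rw [Equiv.swap_apply_def, Equiv.swap_apply_def]
  rw [Prod.ext_iff]
  simp only [Fin.lt_def, Fin.ext_iff]
  split_ifs <;> omega

lemma invs_swap_eq {p q : Fin n} (hpq : p < q) :
    Invs (Equiv.swap p q) = insert (p, q)
      (((Finset.Ioo p q).image (fun k => (p, k))) ∪ ((Finset.Ioo p q).image (fun k => (k, q)))) := by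
  ext e
  rw [mem_invs_swap hpq]
  simp only [Finset.mem_insert, Finset.mem_union, Finset.mem_image, Finset.mem_Ioo]
  constructor
  · rintro (h | ⟨h1, h2, h3⟩ | ⟨h1, h2, h3⟩)
    · exact Or.inl h
    · refine Or.inr (Or.inl ⟨e.2, ⟨h2, h3⟩, ?_⟩)
      rw [Prod.ext_iff]; exact ⟨h1.symm, rfl⟩
    · refine Or.inr (Or.inr ⟨e.1, ⟨h1, h2⟩, ?_⟩)
      rw [Prod.ext_iff]; exact ⟨rfl, h3.symm⟩
  · rintro (h | ⟨k, hk, rfl⟩ | ⟨k, hk, rfl⟩)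
    · exact Or.inl h
    · exact Or.inr (Or.inl ⟨rfl, hk.1, hk.2⟩)
    · exact Or.inr (Or.inr ⟨hk.1, hk.2, rfl⟩)

lemma pq_notMem_union {p q : Fin n} :
    (p, q) ∉ (((Finset.Ioo p q).image (fun k => (p, k))) ∪ ((Finset.Ioo p q).image (fun k => (k, q)))) := by
  simp only [Finset.mem_union, Finset.mem_image, Finset.mem_Ioo]
  rintro (⟨k, hk, he⟩ | ⟨k, hk, he⟩)
  · simp only [Prod.mk.injEq] at he
    rw [he.2] at hk
    exact lt_irrefl q hk.2
  · simp only [Prod.mk.injEq] at he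
    rw [← he.1] at hk
    exact lt_irrefl k hk.1

lemma disj_images {p q : Fin n} :
    Disjoint ((Finset.Ioo p q).image (fun k => (p, k)))
      ((Finset.Ioo p q).image (fun k => (k, q))) := by
  rw [Finset.disjoint_left]
  rintro e he1 he2
  simp only [Finset.mem_image, Finset.mem_Ioo] at he1 he2
  obtain ⟨k, hk, rfl⟩ := he1
  obtain ⟨k', hk', he⟩ := he2
  simp only [Prod.mk.injEq] at he
  rw [← he.1] at hk'
  exact lt_irrefl k' hk'.1

lemma inj_left {p : Fin n} : Function.Injective (fun k : Fin n => (p, k)) := by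
  intro a b h; exact (Prod.ext_iff.mp h).2

lemma inj_right {q : Fin n} : Function.Injective (fun k : Fin n => (k, q)) := by
  intro a b h; exact (Prod.ext_iff.mp h).1

lemma len_swap {p q : Fin n} (hpq : p < q) :
    len (Equiv.swap p q) = 2 * (Finset.Ioo p q).card + 1 := by
  rw [len_eq_card_invs, invs_swap_eq hpq]
  rw [Finset.card_insert_of_notMem pq_notMem_union]
  rw [Finset.card_union_of_disjoint disj_images]
  rw [Finset.card_image_of_injective _ inj_left, Finset.card_image_of_injective _ inj_right]
  ring

lemma card_inter_invs_swap (x : Equiv.Perm (Fin n)) {p q : Fin n} (hpq : p < q) :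
    ((Invs x) ∩ (Invs (Equiv.swap p q))).card
      = (if x q < x p then 1 else 0)
        + ((Finset.Ioo p q).filter (fun k => x k < x p)).card
        + ((Finset.Ioo p q).filter (fun k => x q < x k)).card := by
  classical
  have him1 : ((Finset.Ioo p q).image (fun k => (p, k))) ∩ (Invs x)
      = ((Finset.Ioo p q).filter (fun k => x k < x p)).image (fun k => (p, k)) := by
    ext e
    simp only [Finset.mem_inter, Finset.mem_image, Finset.mem_filter, Finset.mem_Ioo, mem_invs]
    constructor
    · rintro ⟨⟨k, hk, rfl⟩, h2⟩
      exact ⟨k, ⟨hk, h2.2⟩, rfl⟩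
    · rintro ⟨k, ⟨hk, hv⟩, rfl⟩
      exact ⟨⟨k, hk, rfl⟩, hk.1, hv⟩
  have him2 : ((Finset.Ioo p q).image (fun k => (k, q))) ∩ (Invs x)
      = ((Finset.Ioo p q).filter (fun k => x q < x k)).image (fun k => (k, q)) := by
    ext e
    simp only [Finset.mem_inter, Finset.mem_image, Finset.mem_filter, Finset.mem_Ioo, mem_invs]
    constructor
    · rintro ⟨⟨k, hk, rfl⟩, h2⟩
      exact ⟨k, ⟨hk, h2.2⟩, rfl⟩
    · rintro ⟨k, ⟨hk, hv⟩, rfl⟩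
      exact ⟨⟨k, hk, rfl⟩, hk.2, hv⟩
  have hU : ((((Finset.Ioo p q).image (fun k => (p, k))) ∪ ((Finset.Ioo p q).image (fun k => (k, q)))) ∩ (Invs x))
      = (((Finset.Ioo p q).filter (fun k => x k < x p)).image (fun k => (p, k)))
        ∪ (((Finset.Ioo p q).filter (fun k => x q < x k)).image (fun k => (k, q))) := by
    rw [Finset.union_inter_distrib_right, him1, him2]
  have hdisj : Disjoint (((Finset.Ioo p q).filter (fun k => x k < x p)).image (fun k => (p, k)))
      (((Finset.Ioo p q).filter (fun k => x q < x k)).image (fun k => (k, q))) := by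
    apply Finset.disjoint_of_subset_left (Finset.image_subset_image (Finset.filter_subset _ _))
    apply Finset.disjoint_of_subset_right (Finset.image_subset_image (Finset.filter_subset _ _))
    exact disj_images
  have hpqU : (p, q) ∉ (((Finset.Ioo p q).filter (fun k => x k < x p)).image (fun k => (p, k)))
      ∪ (((Finset.Ioo p q).filter (fun k => x q < x k)).image (fun k => (k, q))) := by
    intro hc
    apply pq_notMem_union (p := p) (q := q)
    rcases Finset.mem_union.mp hc with hc | hc
    · exact Finset.mem_union_left _ (Finset.image_subset_image (Finset.filter_subset _ _) hc)
    · exact Finset.mem_union_right _ (Finset.image_subset_image (Finset.filter_subset _ _) hc)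
  rw [Finset.inter_comm, invs_swap_eq hpq]
  by_cases hm : (p, q) ∈ Invs x
  · rw [Finset.insert_inter_of_mem hm, hU, Finset.card_insert_of_notMem hpqU,
      Finset.card_union_of_disjoint hdisj,
      Finset.card_image_of_injective _ inj_left, Finset.card_image_of_injective _ inj_right]
    have hx : x q < x p := (mem_invs.mp hm).2
    rw [if_pos hx]
    omega
  · rw [Finset.insert_inter_of_notMem hm, hU,
      Finset.card_union_of_disjoint hdisj,
      Finset.card_image_of_injective _ inj_left, Finset.card_image_of_injective _ inj_right]
    have hx : ¬ (x q < x p) := fun hc => hm (mem_invs.mpr ⟨hpq, hc⟩)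
    rw [if_neg hx]
    omega

lemma union_filters_le (x : Equiv.Perm (Fin n)) (p q : Fin n) :
    ((Finset.Ioo p q).filter (fun k => x k < x p)).card
      + ((Finset.Ioo p q).filter (fun k => x q < x k)).card
      ≥ (((Finset.Ioo p q).filter (fun k => x k < x p)) ∪ ((Finset.Ioo p q).filter (fun k => x q < x k))).card :=
  Finset.card_union_le _ _

lemma len_mul_swap_lt (x : Equiv.Perm (Fin n)) {p q : Fin n} (hpq : p < q)
    (hv : x q < x p) : len (x * Equiv.swap p q) < len x := by
  have M := len_mul_swap_formula x (ne_of_lt hpq)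
  have hc := card_inter_invs_swap x hpq
  have hs := len_swap hpq
  have hcov : ((Finset.Ioo p q).filter (fun k => x k < x p)) ∪ ((Finset.Ioo p q).filter (fun k => x q < x k))
      = Finset.Ioo p q := by
    rw [← Finset.filter_or]
    apply Finset.filter_true_of_mem
    intro k hk
    rw [Finset.mem_Ioo] at hk
    rcases lt_or_ge (x k) (x p) with h | h
    · exact Or.inl h
    · refine Or.inr (lt_of_lt_of_le hv ?_)
      exact h
  have hge := union_filters_le x p q
  rw [hcov] at hge
  rw [if_pos hv] at hc
  omega

lemma len_mul_swap_gt (x : Equiv.Perm (Fin n)) {p q : Fin n} (hpq : p < q)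
    (hv : x p < x q) : len x < len (x * Equiv.swap p q) := by
  have M := len_mul_swap_formula x (ne_of_lt hpq)
  have hc := card_inter_invs_swap x hpq
  have hs := len_swap hpq
  have hle : (((Finset.Ioo p q).filter (fun k => x k < x p)) ∪ ((Finset.Ioo p q).filter (fun k => x q < x k))).card
      ≤ (Finset.Ioo p q).card := by
    apply Finset.card_le_card
    exact Finset.union_subset (Finset.filter_subset _ _) (Finset.filter_subset _ _)
  have hdisj : Disjoint ((Finset.Ioo p q).filter (fun k => x k < x p))
      ((Finset.Ioo p q).filter (fun k => x q < x k)) := by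
    rw [Finset.disjoint_left]
    intro k h1 h2
    rw [Finset.mem_filter] at h1 h2
    exact absurd (lt_trans (lt_trans h2.2 h1.2) hv) (lt_irrefl _)
  have hcard := Finset.card_union_of_disjoint hdisj
  have hx : ¬ (x q < x p) := fun hc' => absurd (lt_trans hv hc') (lt_irrefl _)
  rw [if_neg hx] at hc
  omega

lemma len_mul_swap_cover (x : Equiv.Perm (Fin n)) {p q : Fin n} (hpq : p < q)
    (hv : x p < x q) (hbet : ∀ k : Fin n, p < k → k < q → ¬ (x p < x k ∧ x k < x q)) :
    len (x * Equiv.swap p q) = len x + 1 := by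
  have M := len_mul_swap_formula x (ne_of_lt hpq)
  have hc := card_inter_invs_swap x hpq
  have hs := len_swap hpq
  have hcov : ((Finset.Ioo p q).filter (fun k => x k < x p)) ∪ ((Finset.Ioo p q).filter (fun k => x q < x k))
      = Finset.Ioo p q := by
    rw [← Finset.filter_or]
    apply Finset.filter_true_of_mem
    intro k hk
    rw [Finset.mem_Ioo] at hk
    rcases lt_or_ge (x k) (x p) with h | h
    · exact Or.inl h
    · have h1 : x p ≠ x k := fun hc' => (ne_of_lt hk.1) (x.injective hc')
      have h2 : x p < x k := lt_of_le_of_ne h h1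
      have h3 : x k ≠ x q := fun hc' => (ne_of_lt hk.2) (x.injective hc')
      have h4 := hbet k hk.1 hk.2
      have h5 : ¬ (x k < x q) := fun hc' => h4 ⟨h2, hc'⟩
      exact Or.inr (lt_of_le_of_ne (not_lt.mp h5) h3.symm)
  have hdisj : Disjoint ((Finset.Ioo p q).filter (fun k => x k < x p))
      ((Finset.Ioo p q).filter (fun k => x q < x k)) := by
    rw [Finset.disjoint_left]
    intro k h1 h2
    rw [Finset.mem_filter] at h1 h2
    exact absurd (lt_trans (lt_trans hv h2.2) h1.2) (lt_irrefl _)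
  have hcard := Finset.card_union_of_disjoint hdisj
  rw [hcov] at hcard
  have hx : ¬ (x q < x p) := fun hc' => absurd (lt_trans hv hc') (lt_irrefl _)
  rw [if_neg hx] at hc
  omega

/-- chain lemma: multiplying by a value-increasing swap goes up in Bruhat order -/
lemma up_chain : ∀ (g : ℕ) (x : Equiv.Perm (Fin n)) (p q : Fin n), p < q → x p < x q →
    len (x * Equiv.swap p q) = len x + g → bruhatLE x (x * Equiv.swap p q) := by
  intro g
  induction g using Nat.strong_induction_on with
  | _ g IH =>
    intro x p q hpq hv hlen
    by_cases hbet : ∀ k : Fin n, p < k → k < q → ¬ (x p < x k ∧ x k < x q)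
    · have hcov := len_mul_swap_cover x hpq hv hbet
      exact Relation.ReflTransGen.single
        ⟨⟨Equiv.swap p q, ⟨p, q, ne_of_lt hpq, rfl⟩, rfl⟩, hcov⟩
    · push_neg at hbet
      obtain ⟨k, hk1, hk2, hk3, hk4⟩ := hbet
      set x1 := x * Equiv.swap p k with hx1
      set x2 := x1 * Equiv.swap k q with hx2
      have hqp : q ≠ p := ne_of_gt hpq
      have hqk : q ≠ k := ne_of_gt hk2
      have hpk : p ≠ k := ne_of_lt hk1
      have hx1p : x1 p = x k := by rw [hx1, Equiv.Perm.mul_apply, Equiv.swap_apply_left]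
      have hx1k : x1 k = x p := by rw [hx1, Equiv.Perm.mul_apply, Equiv.swap_apply_right]
      have hx1q : x1 q = x q := by
        rw [hx1, Equiv.Perm.mul_apply, Equiv.swap_apply_of_ne_of_ne hqp hqk]
      have hx2p : x2 p = x k := by
        rw [hx2, Equiv.Perm.mul_apply, Equiv.swap_apply_of_ne_of_ne hpk hqp.symm, hx1p]
      have hx2k : x2 k = x q := by
        rw [hx2, Equiv.Perm.mul_apply, Equiv.swap_apply_left, hx1q]
      have hx2q : x2 q = x p := by
        rw [hx2, Equiv.Perm.mul_apply, Equiv.swap_apply_right, hx1k]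
      have hswap : Equiv.swap p k * Equiv.swap k q * Equiv.swap p k = Equiv.swap p q := by
        rw [Equiv.swap_comm p k, Equiv.swap_comm k q]
        exact Equiv.swap_mul_swap_mul_swap hqk hqp
      have hx3 : x2 * Equiv.swap p k = x * Equiv.swap p q := by
        rw [hx2, hx1, ← hswap, ← mul_assoc, ← mul_assoc]
      have l1 : len x < len x1 := len_mul_swap_gt x hk1 hk3
      have l2 : len x1 < len x2 := by
        apply len_mul_swap_gt x1 hk2
        rw [hx1k, hx1q]
        exact hv
      have l3 : len x2 < len (x2 * Equiv.swap p k) := by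
        apply len_mul_swap_gt x2 hk1
        rw [hx2p, hx2k]
        exact hk4
      have l3q : len x2 < len (x * Equiv.swap p q) := by rw [← hx3]; exact l3
      have s1 : bruhatLE x x1 := by
        apply IH (len x1 - len x) (by omega) x p k hk1 hk3
        rw [← hx1]
        omega
      have s2 : bruhatLE x1 x2 := by
        apply IH (len x2 - len x1) (by omega) x1 k q hk2
        · rw [hx1k, hx1q]; exact hv
        · rw [← hx2]
          omega
      have s3 : bruhatLE x2 (x * Equiv.swap p q) := by
        rw [← hx3]
        apply IH (len (x2 * Equiv.swap p k) - len x2) (by rw [hx3]; omega) x2 p k hk1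
        · rw [hx2p, hx2k]; exact hk4
        · omega
      exact Relation.ReflTransGen.trans (Relation.ReflTransGen.trans s1 s2) s3

/-- Bruhat order implies rank dominance -/
lemma bruhat_to_dom {x y : Equiv.Perm (Fin n)} (h : bruhatLE x y) :
    ∀ a b : ℕ, rk y a b ≤ rk x a b := by
  induction h with
  | refl => exact fun a b => le_refl _
  | tail hab hbc ih =>
    rename_i b' c'
    obtain ⟨⟨t, ⟨f1, f2, hne, rfl⟩, rfl⟩, hlen⟩ := hbc
    intro a b
    refine le_trans ?_ (ih a b)
    rcases hne.lt_or_gt with hlt | hlt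
    · have hvne : b' f1 ≠ b' f2 := fun hc => hne (b'.injective hc)
      have hv : b' f1 < b' f2 := by
        rcases lt_or_ge (b' f1) (b' f2) with h' | h'
        · exact h'
        · have h2 : b' f2 < b' f1 := lt_of_le_of_ne h' hvne.symm
          have := len_mul_swap_lt b' hlt h2
          omega
      rw [Fin.lt_def] at hv
      exact rk_mul_swap_le b' hlt hv a b
    · rw [Equiv.swap_comm] at hlen ⊢
      have hvne : b' f2 ≠ b' f1 := fun hc => hne.symm (b'.injective hc)
      have hv : b' f2 < b' f1 := by
        rcases lt_or_ge (b' f2) (b' f1) with h' | h'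
        · exact h'
        · have h2 : b' f1 < b' f2 := lt_of_le_of_ne h' hvne.symm
          have := len_mul_swap_lt b' hlt h2
          omega
      rw [Fin.lt_def] at hv
      exact rk_mul_swap_le b' hlt hv a b

/-- rectangle strictness: inside the exchange rectangle dominance is strict -/
lemma rect (u w : Equiv.Perm (Fin n)) (i j : Fin n)
    (hpre : ∀ m : Fin n, (m : ℕ) < (i : ℕ) → u m = w m)
    (hiw : (u i : ℕ) < (w i : ℕ))
    (hjw : (u j : ℕ) ≤ (w i : ℕ))
    (hbet : ∀ m : Fin n, (i : ℕ) < (m : ℕ) → (m : ℕ) < (j : ℕ) →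
      (u m : ℕ) < (u i : ℕ) ∨ (w i : ℕ) < (u m : ℕ))
    (H : ∀ a b : ℕ, a ≤ n → b ≤ n → rk w a b ≤ rk u a b)
    (a b : ℕ) (ha1 : (i : ℕ) < a) (ha2 : a ≤ (j : ℕ)) (hb1 : (u i : ℕ) < b)
    (hb2 : b ≤ (u j : ℕ)) :
    rk w a b < rk u a b := by
  have hwin : (w i : ℕ) < n := (w i).isLt
  have hjn : (j : ℕ) < n := j.isLt
  have hsplit_u := rk_split u i a b ha1
  have hsplit_w := rk_split w i a b ha1
  rw [if_pos hb1] at hsplit_u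
  rw [if_neg (by omega : ¬ ((w i : ℕ) < b))] at hsplit_w
  have hpre_eq : rk u (i : ℕ) b = rk w (i : ℕ) b := rk_congr _ _ hpre
  have h1 : rkIoo w (i : ℕ) a b ≤ rkIoo w (i : ℕ) a ((w i : ℕ) + 1) :=
    rkIoo_mono_b (by omega)
  have hsu := rk_split u i a ((w i : ℕ) + 1) ha1
  have hsw := rk_split w i a ((w i : ℕ) + 1) ha1
  rw [if_pos (by omega : (u i : ℕ) < (w i : ℕ) + 1)] at hsu
  rw [if_pos (Nat.lt_succ_self _)] at hsw
  have hpre_eq2 : rk u (i : ℕ) ((w i : ℕ) + 1) = rk w (i : ℕ) ((w i : ℕ) + 1) :=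
    rk_congr _ _ hpre
  have hH := H a ((w i : ℕ) + 1) (by omega) (by omega)
  have h2 : rkIoo w (i : ℕ) a ((w i : ℕ) + 1) ≤ rkIoo u (i : ℕ) a ((w i : ℕ) + 1) := by
    omega
  have h3 : rkIoo u (i : ℕ) a ((w i : ℕ) + 1) = rkIoo u (i : ℕ) a b := by
    apply rkIoo_congr
    intro m hm1 hm2
    rcases hbet m hm1 (by omega) with h | h
    · constructor <;> intro <;> omega
    · constructor <;> intro <;> omega
  omega

/-- rank dominance implies Bruhat order -/
lemma dom_to_bruhat (w : Equiv.Perm (Fin n)) :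
    ∀ u : Equiv.Perm (Fin n),
      (∀ a b : ℕ, a ≤ n → b ≤ n → rk w a b ≤ rk u a b) → bruhatLE u w := by
  suffices key : ∀ (N : ℕ) (u : Equiv.Perm (Fin n)),
      (∑ e ∈ (Finset.range (n+1)) ×ˢ (Finset.range (n+1)), (rk u e.1 e.2 - rk w e.1 e.2)) = N →
      (∀ a b : ℕ, a ≤ n → b ≤ n → rk w a b ≤ rk u a b) → bruhatLE u w by
    intro u H
    exact key _ u rfl H
  intro N
  induction N using Nat.strong_induction_on with
  | _ N IHN =>
    intro u hD H
    by_cases hequ : u = w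
    · rw [hequ]
      exact Relation.ReflTransGen.refl
    · have hne : (Finset.univ.filter (fun m : Fin n => u m ≠ w m)).Nonempty := by
        by_contra hc
        rw [Finset.not_nonempty_iff_eq_empty, Finset.filter_eq_empty_iff] at hc
        exact hequ (Equiv.ext (fun m => not_not.mp (hc (Finset.mem_univ m))))
      set i := (Finset.univ.filter (fun m : Fin n => u m ≠ w m)).min' hne with hidef
      have himem : u i ≠ w i :=
        (Finset.mem_filter.mp (Finset.min'_mem _ hne)).2
      have hpre : ∀ m : Fin n, (m : ℕ) < (i : ℕ) → u m = w m := by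
        intro m hm
        by_contra hc
        have h2 : i ≤ m := Finset.min'_le _ m (Finset.mem_filter.mpr ⟨Finset.mem_univ m, hc⟩)
        rw [Fin.le_def] at h2
        omega
      have hiw : (u i : ℕ) < (w i : ℕ) := by
        have hup : ∀ b : ℕ, b ≤ n →
            ((if (w i : ℕ) < b then 1 else 0) : ℕ) ≤ (if (u i : ℕ) < b then 1 else 0) := by
          intro b hb
          have h1 := rk_succ u i b
          have h2 := rk_succ w i b
          have h3 : rk u (i : ℕ) b = rk w (i : ℕ) b := rk_congr _ _ hpre
          have h4 := H ((i : ℕ) + 1) b (by have := i.isLt; omega) hb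
          split_ifs at h1 h2 ⊢ <;> omega
        have hb := hup ((w i : ℕ) + 1) (by have := (w i).isLt; omega)
        rw [if_pos (Nat.lt_succ_self _)] at hb
        have hvne : (u i : ℕ) ≠ (w i : ℕ) := fun e => himem (Fin.ext e)
        split_ifs at hb with hs
        · omega
        · omega
      have hk0 : ∃ k : Fin n, (i : ℕ) < (k : ℕ) ∧ (u i : ℕ) < (u k : ℕ) ∧ (u k : ℕ) ≤ (w i : ℕ) := by
        refine ⟨u.symm (w i), ?_, ?_, ?_⟩
        · have huk : u (u.symm (w i)) = w i := u.apply_symm_apply _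
          have hki : u.symm (w i) ≠ i := by
            intro hc
            rw [hc] at huk
            exact himem huk
          have hkv : (u.symm (w i) : ℕ) ≠ (i : ℕ) := fun e => hki (Fin.ext e)
          rcases Nat.lt_or_ge (i : ℕ) ((u.symm (w i)) : ℕ) with h | h
          · exact h
          · exfalso
            have hlt : ((u.symm (w i)) : ℕ) < (i : ℕ) := by omega
            have := hpre _ hlt
            rw [huk] at this
            exact (ne_of_lt (Fin.lt_def.mpr hlt)) (w.injective this.symm)
        · rw [u.apply_symm_apply]
          exact hiw
        · rw [u.apply_symm_apply]
      have hTne : (Finset.univ.filter (fun k : Fin n =>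
          (i : ℕ) < (k : ℕ) ∧ (u i : ℕ) < (u k : ℕ) ∧ (u k : ℕ) ≤ (w i : ℕ))).Nonempty := by
        obtain ⟨k, h1, h2, h3⟩ := hk0
        exact ⟨k, Finset.mem_filter.mpr ⟨Finset.mem_univ _, h1, h2, h3⟩⟩
      set j := (Finset.univ.filter (fun k : Fin n =>
          (i : ℕ) < (k : ℕ) ∧ (u i : ℕ) < (u k : ℕ) ∧ (u k : ℕ) ≤ (w i : ℕ))).min' hTne with hjdef
      obtain ⟨-, hij, hjv, hjw⟩ := Finset.mem_filter.mp (Finset.min'_mem _ hTne)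
      have hbet : ∀ m : Fin n, (i : ℕ) < (m : ℕ) → (m : ℕ) < (j : ℕ) →
          (u m : ℕ) < (u i : ℕ) ∨ (w i : ℕ) < (u m : ℕ) := by
        intro m h1 h2
        by_contra hc
        push_neg at hc
        obtain ⟨hc1, hc2⟩ := hc
        have hmi : m ≠ i := by
          intro e
          rw [e] at h1
          omega
        have hvm : (u m : ℕ) ≠ (u i : ℕ) := fun e => hmi (u.injective (Fin.ext e))
        have hmT : m ∈ Finset.univ.filter (fun k : Fin n =>
            (i : ℕ) < (k : ℕ) ∧ (u i : ℕ) < (u k : ℕ) ∧ (u k : ℕ) ≤ (w i : ℕ)) :=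
          Finset.mem_filter.mpr ⟨Finset.mem_univ _, h1, by omega, hc2⟩
        have h3 := Finset.min'_le _ m hmT
        rw [← hjdef] at h3
        rw [Fin.le_def] at h3
        omega
      have hijF : i < j := Fin.lt_def.mpr hij
      have hviF : u i < u j := Fin.lt_def.mpr hjv
      have H' : ∀ a b : ℕ, a ≤ n → b ≤ n → rk w a b ≤ rk (u * Equiv.swap i j) a b := by
        intro a b ha hb
        by_cases h1 : (i : ℕ) < a ∧ a ≤ (j : ℕ)
        · have hmid := rk_mul_swap_mid u hijF b h1.1 h1.2
          by_cases hb1 : (u i : ℕ) < b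
          · by_cases hb2 : b ≤ (u j : ℕ)
            · have hrect := rect u w i j hpre hiw hjw hbet H a b h1.1 h1.2 hb1 hb2
              rw [if_pos hb1, if_neg (by omega)] at hmid
              omega
            · rw [if_pos hb1, if_pos (by omega)] at hmid
              have := H a b ha hb
              omega
          · rw [if_neg hb1, if_neg (by omega)] at hmid
            have := H a b ha hb
            omega
        · have h2 : a ≤ (i : ℕ) ∨ (j : ℕ) < a := by omega
          rw [rk_mul_swap_out u hijF b h2]
          exact H a b ha hb
      have hstep : bruhatLE u (u * Equiv.swap i j) := by
        have hgt := len_mul_swap_gt u hijF hviF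
        apply up_chain (len (u * Equiv.swap i j) - len u) u i j hijF hviF
        omega
      have hle : ∀ a b : ℕ, rk (u * Equiv.swap i j) a b ≤ rk u a b :=
        fun a b => rk_mul_swap_le u hijF hjv a b
      have hstrict : rk (u * Equiv.swap i j) ((i : ℕ) + 1) ((u i : ℕ) + 1) + 1
          = rk u ((i : ℕ) + 1) ((u i : ℕ) + 1) := by
        have hmid := rk_mul_swap_mid u hijF (a := (i : ℕ) + 1) ((u i : ℕ) + 1)
          (Nat.lt_succ_self _) (by omega)
        rw [if_pos (Nat.lt_succ_self _), if_neg (by omega)] at hmid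
        omega
      have hDlt : (∑ e ∈ (Finset.range (n+1)) ×ˢ (Finset.range (n+1)),
          (rk (u * Equiv.swap i j) e.1 e.2 - rk w e.1 e.2)) < N := by
        rw [← hD]
        apply Finset.sum_lt_sum
        · intro e _
          exact Nat.sub_le_sub_right (hle e.1 e.2) _
        · refine ⟨((i : ℕ) + 1, (u i : ℕ) + 1), ?_, ?_⟩
          · rw [Finset.mem_product, Finset.mem_range, Finset.mem_range]
            exact ⟨by have := i.isLt; omega, by have := (u i).isLt; omega⟩
          · have h2 := H' ((i : ℕ) + 1) ((u i : ℕ) + 1)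
              (by have := i.isLt; omega) (by have := (u i).isLt; omega)
            simp only
            omega
      exact Relation.ReflTransGen.trans hstep (IHN _ hDlt (u * Equiv.swap i j) rfl H')

end BruhatAux

/-- Lemma 2.1(2): if `rk_w(a,b) = min(rk_u(a,b), rk_v(a,b))` for all
`(a,b) ∈ [0,n] × [0,n]`, then `w` is the least upper bound (join) of `u` and `v`
in Bruhat order. -/
theorem rank_min_implies_join {n : ℕ} (u v w : Equiv.Perm (Fin n))
    (h : ∀ a b : ℕ, a ≤ n → b ≤ n → rk w a b = min (rk u a b) (rk v a b)) :
    bruhatLE u w ∧ bruhatLE v w ∧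
      ∀ z : Equiv.Perm (Fin n), bruhatLE u z → bruhatLE v z → bruhatLE w z := by
  refine ⟨?_, ?_, ?_⟩
  · apply BruhatAux.dom_to_bruhat
    intro a b ha hb
    rw [h a b ha hb]
    exact min_le_left _ _
  · apply BruhatAux.dom_to_bruhat
    intro a b ha hb
    rw [h a b ha hb]
    exact min_le_right _ _
  · intro z hu hv
    have h1 := BruhatAux.bruhat_to_dom hu
    have h2 := BruhatAux.bruhat_to_dom hv
    apply BruhatAux.dom_to_bruhat
    intro a b ha hb
    rw [h a b ha hb]
    exact le_min (h1 a b) (h2 a b)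
end

section
/- Let w be a permutation and U = {i_1 < i_2 < ⋯ < i_k} a nonempty subset of φ_i(w), and set w_{U,i} = w t_{i,i_k} t_{i,i_{k-1}} ⋯ t_{i,i_1}. Then rk_w(a,b) - rk_{w_{U,i}}(a,b) = 1 if (a,b) lies in the union over h of [i, i_h - 1] × [w(i), w(i_h) - 1], and equals 0 otherwise. -/
/-- `(a, w a)` is a neighbor of `(i, w i)` in the graph of `w ∈ S_n`:
`i ≤ a`, `w i ≤ w a`, `(a, w a) ≠ (i, w i)`, and no other point of the graph of
`w` lies in the rectangle `[i,a] × [w i, w a]`. -/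
def isNbrF {n : ℕ} (w : Equiv.Perm (Fin n)) (i a : Fin n) : Prop :=
  i ≤ a ∧ w i ≤ w a ∧ (a, w a) ≠ (i, w i) ∧
    ∀ a' : Fin n, i ≤ a' → a' ≤ a → w i ≤ w a' → w a' ≤ w a → a' = i ∨ a' = a

/-- For `U = {i_1 < i_2 < ⋯ < i_k}`, the permutation
`w_{U,i} = w t_{i,i_k} t_{i,i_{k-1}} ⋯ t_{i,i_1}` (and `w_{∅,i} = w`). -/
def wUF {n : ℕ} (w : Equiv.Perm (Fin n)) (i : Fin n) (U : Finset (Fin n)) :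
    Equiv.Perm (Fin n) :=
  ((U.sort (· ≤ ·)).reverse).foldl (fun v j => v * Equiv.swap i j) w

/-! Peel off the smallest element `j` of `U` and let `L` be the rest, so that
`w_{U,i} = w_{L,i} * t_{i,j}`; here `w_{L,i}` still sends `j` to `w j`, and sends `i` to `w j'`
for the next element `j'` of `U` (to `w i` if `L = ∅`). Multiplying `v` on the right by
`t_{i,j}` with `i < j` and `v i < v j` lowers `rk_v` by exactly the indicator of the rectangle
`[i, j - 1] × [v i, v j - 1]`. Since the neighbours of `(i, w i)` form a chain with decreasing
values, the staircase region of `U` is the disjoint union of that of `L` and the rectangle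
`[i, j - 1] × [w j', w j - 1]`, which is the one removed by `t_{i,j}`. -/

open Equiv

variable {n : ℕ}

namespace isNbrF

variable {w : Perm (Fin n)} {i g h : Fin n}

theorem lt (hh : isNbrF w i h) : i < h :=
  hh.1.lt_of_ne fun hih => hh.2.2.1 (by rw [hih])

theorem apply_lt (hh : isNbrF w i h) : w i < w h :=
  hh.2.1.lt_of_ne fun hw => hh.lt.ne (w.injective hw)

/-- Otherwise `(g, w g)` would lie in the rectangle spanned by `(i, w i)` and `(h, w h)`. -/
theorem apply_lt_apply_of_lt (hg : isNbrF w i g) (hh : isNbrF w i h) (hgh : g < h) :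
    w h < w g := by
  by_contra! hle
  rcases hh.2.2.2 g hg.lt.le hgh.le hg.apply_lt.le hle with hgi | hgh'
  · exact hg.lt.ne' hgi
  · exact hgh.ne hgh'

end isNbrF

/-- The rectangle `[i, h - 1] × [w i, w h - 1]` of the paper, in the 0-based encoding of `rk`. -/
def InNbrRect (w : Perm (Fin n)) (i h : Fin n) (a b : ℕ) : Prop :=
  (i : ℕ) < a ∧ a ≤ (h : ℕ) ∧ (w i : ℕ) < b ∧ b ≤ (w h : ℕ)

instance (w : Perm (Fin n)) (i h : Fin n) (a b : ℕ) : Decidable (InNbrRect w i h a b) :=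
  inferInstanceAs (Decidable (_ ∧ _))

theorem rk_eq_rk_mul_swap_add (w : Perm (Fin n)) {i j : Fin n} (hij : i < j) (hw : w i < w j)
    (a b : ℕ) :
    rk w a b = rk (w * swap i j) a b + if InNbrRect w i j a b then 1 else 0 := by
  have hji : j ∈ Finset.univ.erase i := Finset.mem_erase.mpr ⟨hij.ne', Finset.mem_univ j⟩
  have hsplit (f : Fin n → ℕ) :
      ∑ m, f m = ∑ m ∈ (Finset.univ.erase i).erase j, f m + f j + f i := by
    rw [Finset.sum_erase_add _ _ hji, Finset.sum_erase_add _ _ (Finset.mem_univ i)]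
  have hfar : ∀ m ∈ (Finset.univ.erase i).erase j,
      (if (m : ℕ) < a ∧ (w m : ℕ) < b then 1 else 0) =
        if (m : ℕ) < a ∧ ((w * swap i j) m : ℕ) < b then 1 else 0 := by
    intro m hm
    have hmi := Finset.ne_of_mem_erase (Finset.mem_of_mem_erase hm)
    rw [Perm.mul_apply, swap_apply_of_ne_of_ne hmi (Finset.ne_of_mem_erase hm)]
  simp only [rk, Finset.card_filter]
  rw [hsplit, hsplit, Finset.sum_congr rfl hfar]
  simp only [Perm.mul_apply, swap_apply_left, swap_apply_right]
  rw [Fin.lt_def] at hij hw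
  by_cases hR : InNbrRect w i j a b
  · rw [if_pos hR]; obtain ⟨_, _, _, _⟩ := hR; split_ifs <;> omega
  · rw [if_neg hR]; simp only [InNbrRect] at hR; split_ifs <;> omega

/-- `mulSwaps w i [j₁, …, jₖ] = w * swap i jₖ * ⋯ * swap i j₁`, so `w_{U,i}` is `mulSwaps` of the
increasing enumeration of `U`. -/
def mulSwaps (w : Perm (Fin n)) (i : Fin n) (L : List (Fin n)) : Perm (Fin n) :=
  L.foldr (fun j v => v * swap i j) w

theorem wUF_eq_mulSwaps (w : Perm (Fin n)) (i : Fin n) (U : Finset (Fin n)) :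
    wUF w i U = mulSwaps w i (U.sort (· ≤ ·)) :=
  List.foldl_reverse ..

@[simp]
theorem mulSwaps_cons (w : Perm (Fin n)) (i j : Fin n) (L : List (Fin n)) :
    mulSwaps w i (j :: L) = mulSwaps w i L * swap i j :=
  rfl

theorem mulSwaps_apply_of_notMem (w : Perm (Fin n)) {i m : Fin n} {L : List (Fin n)}
    (hmL : m ∉ L) (hmi : m ≠ i) : mulSwaps w i L m = w m := by
  induction L with
  | nil => rfl
  | cons j L ih =>
    rw [List.mem_cons, not_or] at hmL
    rw [mulSwaps_cons, Perm.mul_apply, swap_apply_of_ne_of_ne hmi hmL.1]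
    exact ih hmL.2

theorem mulSwaps_apply_self (w : Perm (Fin n)) {i : Fin n} {L : List (Fin n)} (hL : L.Nodup)
    (hiL : i ∉ L) : mulSwaps w i L i = w (L.headD i) := by
  cases L with
  | nil => rfl
  | cons j L =>
    rw [List.nodup_cons] at hL
    rw [mulSwaps_cons, Perm.mul_apply, swap_apply_left]
    exact mulSwaps_apply_of_notMem w hL.1 (List.ne_of_not_mem_cons hiL).symm

section Chain

variable {w : Perm (Fin n)} {i j : Fin n} {L : List (Fin n)}

theorem apply_le_apply_headD (hL : L.Pairwise (· < ·)) (hnbr : ∀ h ∈ L, isNbrF w i h)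
    {h : Fin n} (hh : h ∈ i :: L) : w h ≤ w (L.headD i) := by
  cases L with
  | nil => rw [List.mem_singleton.mp hh]; rfl
  | cons j L =>
    rcases List.mem_cons.mp hh with rfl | hh
    · exact (hnbr j List.mem_cons_self).apply_lt.le
    rcases List.mem_cons.mp hh with rfl | hh
    · rfl
    exact ((hnbr j List.mem_cons_self).apply_lt_apply_of_lt (hnbr h (List.mem_cons_of_mem j hh))
      (List.rel_of_pairwise_cons hL hh)).le

theorem apply_headD_lt (hL : (j :: L).Pairwise (· < ·)) (hnbr : ∀ h ∈ j :: L, isNbrF w i h) :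
    w (L.headD i) < w j := by
  cases L with
  | nil => exact (hnbr j List.mem_cons_self).apply_lt
  | cons k L =>
    exact (hnbr j List.mem_cons_self).apply_lt_apply_of_lt (hnbr k (by simp))
      (List.rel_of_pairwise_cons hL List.mem_cons_self)

theorem exists_inNbrRect_cons_iff (hL : (j :: L).Pairwise (· < ·))
    (hnbr : ∀ h ∈ j :: L, isNbrF w i h) (a b : ℕ) :
    (∃ h ∈ j :: L, InNbrRect w i h a b) ↔ (∃ h ∈ L, InNbrRect w i h a b) ∨
      ((i : ℕ) < a ∧ a ≤ (j : ℕ) ∧ (w (L.headD i) : ℕ) < b ∧ b ≤ (w j : ℕ)) := by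
  constructor
  · rintro ⟨h, hh, hia, hah, hib, hbh⟩
    rcases List.mem_cons.mp hh with rfl | hh
    · by_cases hb : (w (L.headD i) : ℕ) < b
      · exact .inr ⟨hia, hah, hb, hbh⟩
      cases L with
      | nil => exact absurd hib hb
      | cons k L =>
        have hhk : h < k := List.rel_of_pairwise_cons hL List.mem_cons_self
        exact .inl ⟨k, List.mem_cons_self, hia, by omega, hib, by simpa using hb⟩
    · exact .inl ⟨h, hh, hia, hah, hib, hbh⟩
  · rintro (⟨h, hh, hR⟩ | ⟨hia, haj, hb, hbj⟩)
    · exact ⟨h, List.mem_cons_of_mem j hh, hR⟩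
    · have hi : w i ≤ w (L.headD i) := apply_le_apply_headD hL.of_cons
        (fun h hh => hnbr h (List.mem_cons_of_mem j hh)) List.mem_cons_self
      exact ⟨j, List.mem_cons_self, hia, haj, by omega, hbj⟩

theorem rk_eq_rk_mulSwaps_add (hL : L.Pairwise (· < ·)) (hnbr : ∀ h ∈ L, isNbrF w i h)
    (a b : ℕ) :
    rk w a b = rk (mulSwaps w i L) a b + if ∃ h ∈ L, InNbrRect w i h a b then 1 else 0 := by
  induction L with
  | nil => simp [mulSwaps]
  | cons j L ih =>
    have hnbrL : ∀ h ∈ L, isNbrF w i h := fun h hh => hnbr h (List.mem_cons_of_mem j hh)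
    have hj : isNbrF w i j := hnbr j List.mem_cons_self
    have hvi : mulSwaps w i L i = w (L.headD i) :=
      mulSwaps_apply_self w hL.of_cons.nodup fun hi => (hnbrL i hi).lt.false
    have hvj : mulSwaps w i L j = w j :=
      mulSwaps_apply_of_notMem w (List.nodup_cons.mp hL.nodup).1 hj.lt.ne'
    have hswap := rk_eq_rk_mul_swap_add (mulSwaps w i L) hj.lt
      (by rw [hvi, hvj]; exact apply_headD_lt hL hnbr) a b
    have hrect : InNbrRect (mulSwaps w i L) i j a b ↔
        (i : ℕ) < a ∧ a ≤ (j : ℕ) ∧ (w (L.headD i) : ℕ) < b ∧ b ≤ (w j : ℕ) := by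
      rw [InNbrRect, hvi, hvj]
    have hdisj : (∃ h ∈ L, InNbrRect w i h a b) → b ≤ (w (L.headD i) : ℕ) := by
      rintro ⟨h, hh, -, -, -, hbh⟩
      exact hbh.trans (apply_le_apply_headD hL.of_cons hnbrL (List.mem_cons_of_mem i hh))
    rw [ih hL.of_cons hnbrL, hswap, mulSwaps_cons,
      if_congr (exists_inNbrRect_cons_iff hL hnbr a b) rfl rfl, if_congr hrect rfl rfl]
    split_ifs <;> grind

end Chain

theorem rank_diff_wU_general {n : ℕ} (w : Equiv.Perm (Fin n)) (i : Fin n)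
    (U : Finset (Fin n)) (hU : ∀ a ∈ U, isNbrF w i a)
    (a b : ℕ) :
    ((∃ h ∈ U, (i : ℕ) < a ∧ a ≤ (h : ℕ) ∧ (w i : ℕ) < b ∧ b ≤ (w h : ℕ)) →
        rk w a b = rk (wUF w i U) a b + 1) ∧
    ((¬ ∃ h ∈ U, (i : ℕ) < a ∧ a ≤ (h : ℕ) ∧ (w i : ℕ) < b ∧ b ≤ (w h : ℕ)) →
        rk w a b = rk (wUF w i U) a b) := by
  have hrk := rk_eq_rk_mulSwaps_add (Finset.sortedLT_sort U).pairwise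
    (fun h hh => hU h ((Finset.mem_sort _).mp hh)) a b
  have hmem : (∃ h ∈ U.sort (· ≤ ·), InNbrRect w i h a b) ↔ ∃ h ∈ U, InNbrRect w i h a b := by
    simp only [Finset.mem_sort]
  rw [← wUF_eq_mulSwaps, if_congr hmem rfl rfl] at hrk
  exact ⟨fun hR => by rwa [if_pos (show ∃ h ∈ U, InNbrRect w i h a b from hR)] at hrk,
    fun hR => by rwa [if_neg (show ¬∃ h ∈ U, InNbrRect w i h a b from hR), add_zero] at hrk⟩

/-- Lemma 4.5: for nonempty `U = {i_1 < ⋯ < i_k} ⊆ φ_i(w)`,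
`rk_w(a,b) - rk_{w_{U,i}}(a,b) = 1` if `(a,b)` lies in
`⋃_h [i, i_h - 1] × [w(i), w(i_h) - 1]` (expressed here in the 0-based
encoding as `i < a ≤ i_h` and `w(i) < b ≤ w(i_h)`), and `= 0` otherwise. -/
theorem rank_diff_wU {n : ℕ} (w : Equiv.Perm (Fin n)) (i : Fin n)
    (U : Finset (Fin n)) (hne : U.Nonempty) (hU : ∀ a ∈ U, isNbrF w i a)
    (a b : ℕ) (ha : a ≤ n) (hb : b ≤ n) :
    ((∃ h ∈ U, (i : ℕ) < a ∧ a ≤ (h : ℕ) ∧ (w i : ℕ) < b ∧ b ≤ (w h : ℕ)) →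
        rk w a b = rk (wUF w i U) a b + 1) ∧
    ((¬ ∃ h ∈ U, (i : ℕ) < a ∧ a ≤ (h : ℕ) ∧ (w i : ℕ) < b ∧ b ≤ (w h : ℕ)) →
        rk w a b = rk (wUF w i U) a b) :=
  rank_diff_wU_general w i U hU a b
end

section
/- Let w ∈ S_n with w ≠ w₀ and let (i,j) be an addable cell of the dominant part of the Rothe diagram of w with j = α(w) (the leftmost column containing such an addable cell (i,j) with i + j ≤ n). Then w < w s_i, i.e., w(i) < w(i+1). -/
/-- The value `w(i)` in 1-based one-line notation, for the permutation of
`{1, …, n}` determined by `w : Equiv.Perm (Fin n)` (extended by the identity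
outside `[1,n]`, matching the embedding `S_n ↪ S_+`). -/
def act {n : ℕ} (w : Equiv.Perm (Fin n)) (i : ℕ) : ℕ :=
  if h : 1 ≤ i ∧ i ≤ n then ((w ⟨i - 1, by omega⟩ : Fin n) : ℕ) + 1 else i

/-- The Rothe diagram `D(w) = {(i,j) : w(i) > j and w⁻¹(j) > i}`, 1-based. -/
def rd {n : ℕ} (w : Equiv.Perm (Fin n)) : Set (ℕ × ℕ) :=
  {p | 1 ≤ p.1 ∧ 1 ≤ p.2 ∧ p.2 < act w p.1 ∧ p.1 < act w⁻¹ p.2}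

/-- The dominant part `dom(w)` of the Rothe diagram: the largest Young-diagram
shaped subset, i.e. cells whose whole upper-left rectangle lies in `D(w)`. -/
def domP {n : ℕ} (w : Equiv.Perm (Fin n)) : Set (ℕ × ℕ) :=
  {p | 1 ≤ p.1 ∧ 1 ≤ p.2 ∧
    ∀ q : ℕ × ℕ, 1 ≤ q.1 → 1 ≤ q.2 → q.1 ≤ p.1 → q.2 ≤ p.2 → q ∈ rd w}

/-- `(i,j)` is an addable cell of `dom(w)`. -/
def addableP {n : ℕ} (w : Equiv.Perm (Fin n)) (i j : ℕ) : Prop :=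
  1 ≤ i ∧ 1 ≤ j ∧ (i, j) ∉ domP w ∧
    (1 < i → (i - 1, j) ∈ domP w) ∧ (1 < j → (i, j - 1) ∈ domP w)

/-- `(i,j)` is an addable cell of `dom(w)` with `j = α(w)`, i.e. `i + j ≤ n` and
`j` is the leftmost column containing an addable cell `(i',j')` with `i'+j' ≤ n`. -/
def alphaCell {n : ℕ} (w : Equiv.Perm (Fin n)) (i j : ℕ) : Prop :=
  addableP w i j ∧ i + j ≤ n ∧
    ∀ i' j', addableP w i' j' → i' + j' ≤ n → j ≤ j'

/-- `(a, w(a))` is a neighbor of `(i, w(i))` in the graph of `w` (1-based):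
`i ≤ a`, `w(i) ≤ w(a)`, `(a, w(a)) ≠ (i, w(i))`, and no other point of the
graph of `w` lies in the rectangle `[i,a] × [w(i), w(a)]`. -/
def isNbrP {n : ℕ} (w : Equiv.Perm (Fin n)) (i a : ℕ) : Prop :=
  i ≤ a ∧ act w i ≤ act w a ∧ (a, act w a) ≠ (i, act w i) ∧
    ∀ a', i ≤ a' → a' ≤ a → act w i ≤ act w a' → act w a' ≤ act w a →
      a' = i ∨ a' = a

/-! Since `(i, j)` is addable, the cells left of and above it lie in `D(w)` while `(i, j)` does
not, which forces `w(i) = j`. If we had `w(i+1) < j`, then `(i+1, w(i+1))` would be an addable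
cell in an earlier column, still with `(i+1) + w(i+1) ≤ n`, contradicting the minimality of
`j = α(w)`. Finally, swapping the adjacent non-inversion `w(i) < w(i+1)` adds one inversion. -/

section Act

variable {n : ℕ} (w : Equiv.Perm (Fin n))

lemma act_apply (k : Fin n) : act w ((k : ℕ) + 1) = (w k : ℕ) + 1 := by
  simp [act]

lemma act_of_le {i : ℕ} (h1 : 1 ≤ i) (h2 : i ≤ n) :
    act w i = (w ⟨i - 1, by omega⟩ : ℕ) + 1 := by
  simp [act, h1, h2]

lemma one_le_act {i : ℕ} (h : 1 ≤ i) : 1 ≤ act w i := by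
  unfold act
  split_ifs <;> omega

lemma act_le {i : ℕ} (h1 : 1 ≤ i) (h2 : i ≤ n) : act w i ≤ n := by
  rw [act_of_le w h1 h2]
  exact Fin.is_lt _

lemma act_inv_act {i : ℕ} (h1 : 1 ≤ i) (h2 : i ≤ n) : act w⁻¹ (act w i) = i := by
  obtain ⟨k, rfl⟩ : ∃ k : Fin n, (k : ℕ) + 1 = i := ⟨⟨i - 1, by omega⟩, by simp; omega⟩
  simp [act_apply]

lemma act_act_inv {m : ℕ} (h1 : 1 ≤ m) (h2 : m ≤ n) : act w (act w⁻¹ m) = m := by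
  simpa using act_inv_act w⁻¹ h1 h2

lemma eq_of_act_eq {i i' : ℕ} (h1 : 1 ≤ i) (h2 : i ≤ n) (h1' : 1 ≤ i') (h2' : i' ≤ n)
    (he : act w i = act w i') : i = i' := by
  rw [← act_inv_act w h1 h2, he, act_inv_act w h1' h2']

end Act

section Length

variable {n : ℕ}

lemma swap_lt_swap_of_succ_eq {a b p q : Fin n} (hab : (a : ℕ) + 1 = b) (hpq : p < q)
    (hne : (p, q) ≠ (a, b)) : Equiv.swap a b p < Equiv.swap a b q := by
  simp only [ne_eq, Prod.mk.injEq, Fin.ext_iff] at hne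
  rw [Fin.lt_def] at hpq
  rw [Equiv.swap_apply_def, Equiv.swap_apply_def]
  split_ifs <;> simp only [Fin.lt_def, Fin.ext_iff] at * <;> omega

def inversions (w : Equiv.Perm (Fin n)) : Finset (Fin n × Fin n) :=
  Finset.univ.filter (fun p : Fin n × Fin n => p.1 < p.2 ∧ w p.2 < w p.1)

lemma mem_inversions {w : Equiv.Perm (Fin n)} {p : Fin n × Fin n} :
    p ∈ inversions w ↔ p.1 < p.2 ∧ w p.2 < w p.1 := by
  rw [inversions, Finset.mem_filter]
  exact and_iff_right (Finset.mem_univ p)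

lemma len_eq_card_inversions (w : Equiv.Perm (Fin n)) : len w = (inversions w).card :=
  rfl

/-- With `s = swap a b`, the map `p ↦ (s p.1, s p.2)` sends the inversions of `w` injectively
to inversions of `w * s` other than `(a, b)`. -/
lemma len_lt_len_mul_swap (w : Equiv.Perm (Fin n)) {a b : Fin n}
    (hab : (a : ℕ) + 1 = b) (hw : w a < w b) : len w < len (w * Equiv.swap a b) := by
  have hab_lt : a < b := Fin.lt_def.2 (by omega)
  have hab_mem : (a, b) ∈ inversions (w * Equiv.swap a b) := by
    simpa [mem_inversions, hab_lt] using hw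
  have hmaps : ∀ p ∈ inversions w,
      (Equiv.swap a b p.1, Equiv.swap a b p.2) ∈ (inversions (w * Equiv.swap a b)).erase (a, b) := by
    intro p hp
    rw [mem_inversions] at hp
    have hne : (p.1, p.2) ≠ (a, b) := by
      rintro ⟨⟩
      exact lt_asymm hw hp.2
    refine Finset.mem_erase.2 ⟨fun he => ?_, ?_⟩
    · have hb : p.1 = b := by simpa [Equiv.swap_apply_eq_iff] using congrArg Prod.fst he
      have ha : p.2 = a := by simpa [Equiv.swap_apply_eq_iff] using congrArg Prod.snd he
      exact lt_asymm hab_lt (hb ▸ ha ▸ hp.1)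
    · simpa [mem_inversions] using ⟨swap_lt_swap_of_succ_eq hab hp.1 hne, hp.2⟩
  rw [len_eq_card_inversions, len_eq_card_inversions]
  calc (inversions w).card ≤ ((inversions (w * Equiv.swap a b)).erase (a, b)).card :=
        Finset.card_le_card_of_injOn _ hmaps
          (fun p _ q _ he => by simpa [Prod.ext_iff] using he)
    _ < (inversions (w * Equiv.swap a b)).card := Finset.card_erase_lt_of_mem hab_mem

lemma len_lt_len_mul_simpleRefl (w : Equiv.Perm (Fin n)) {i : ℕ} (h1 : 1 ≤ i)
    (h2 : i < n) (hw : act w i < act w (i + 1)) : len w < len (w * simpleRefl n i) := by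
  rw [simpleRefl, dif_pos ⟨h1, h2⟩]
  refine len_lt_len_mul_swap w (show i - 1 + 1 = i by omega) ?_
  have ha := act_apply w ⟨i - 1, by omega⟩
  have hb := act_apply w ⟨i, h2⟩
  rw [Fin.val_mk, Nat.sub_add_cancel h1] at ha
  rw [Fin.val_mk] at hb
  rw [Fin.lt_def]
  omega

end Length

section Dominant

variable {n : ℕ} {w : Equiv.Perm (Fin n)}

lemma mem_domP_of_le {i j i' j' : ℕ} (h : (i, j) ∈ domP w) (hi' : 1 ≤ i') (hj' : 1 ≤ j')
    (hii : i' ≤ i) (hjj : j' ≤ j) : (i', j') ∈ domP w :=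
  ⟨hi', hj', fun q hq1 hq2 hqi hqj => h.2.2 q hq1 hq2 (hqi.trans hii) (hqj.trans hjj)⟩

lemma mem_rd_of_mem_domP {p : ℕ × ℕ} (h : p ∈ domP w) : p ∈ rd w :=
  h.2.2 p h.1 h.2.1 le_rfl le_rfl

namespace addableP

variable {i j : ℕ}

lemma not_mem_rd (h : addableP w i j) : (i, j) ∉ rd w := by
  obtain ⟨hi, hj, hnd, hup, hleft⟩ := h
  refine fun hrd => hnd ⟨hi, hj, fun q hq1 hq2 hqi hqj => ?_⟩
  rcases hqi.lt_or_eq with hlt | rfl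
  · exact (hup (by omega)).2.2 q hq1 hq2 (by omega) hqj
  rcases hqj.lt_or_eq with hlt | rfl
  · exact (hleft (by omega)).2.2 q hq1 hq2 le_rfl (by omega)
  exact hrd

lemma le_act (h : addableP w i j) : j ≤ act w i := by
  obtain ⟨hi, hj, -, -, hleft⟩ := h
  rcases hj.lt_or_eq with hlt | rfl
  · have : j - 1 < act w i := (mem_rd_of_mem_domP (hleft hlt)).2.2.1
    omega
  · exact one_le_act w hi

lemma le_act_inv (h : addableP w i j) : i ≤ act w⁻¹ j := by
  obtain ⟨hi, hj, -, hup, -⟩ := h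
  rcases hi.lt_or_eq with hlt | rfl
  · have : i - 1 < act w⁻¹ j := (mem_rd_of_mem_domP (hup hlt)).2.2.2
    omega
  · exact one_le_act w⁻¹ hj

lemma act_eq (h : addableP w i j) (hjn : j ≤ n) : act w i = j := by
  refine (h.le_act.lt_or_eq.resolve_left fun hlt => ?_).symm
  have hinv : act w⁻¹ j = i := by
    have := h.le_act_inv
    have : ¬i < act w⁻¹ j := fun hc => h.not_mem_rd ⟨h.1, h.2.1, hlt, hc⟩
    omega
  rw [← hinv, act_act_inv w h.2.1 hjn] at hlt
  exact hlt.false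

end addableP

/-- The cell of the graph of `w` in row `i + 1` is addable as soon as it lies weakly left of a
cell of `dom(w)` in row `i`. -/
lemma addableP_succ_act {i m : ℕ} (hi : 1 ≤ i) (hin : i < n) (hdom : (i, m) ∈ domP w)
    (hm : act w (i + 1) ≤ m) : addableP w (i + 1) (act w (i + 1)) := by
  set k := act w (i + 1)
  have hk : 1 ≤ k := one_le_act w (by omega)
  have hkn : k ≤ n := act_le w (by omega) hin
  refine ⟨by omega, hk, fun hd => (mem_rd_of_mem_domP hd).2.2.1.false, fun _ => ?_,
    fun _ => ⟨by omega, by omega, ?_⟩⟩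
  · simpa using mem_domP_of_le hdom hi hk le_rfl hm
  rintro ⟨r, c⟩ hr hc (hri : r ≤ i + 1) (hck : c ≤ k - 1)
  rcases hri.lt_or_eq with hlt | rfl
  · exact hdom.2.2 _ hr hc (by omega) (by omega)
  have hrow : i < act w⁻¹ c := (hdom.2.2 (i, c) hi hc le_rfl (by omega)).2.2.2
  have hne : act w⁻¹ c ≠ i + 1 := fun he => by
    have := act_act_inv w hc (by omega)
    rw [he] at this
    omega
  exact ⟨hr, hc, show c < k by omega, show i + 1 < act w⁻¹ c by omega⟩

end Dominant

theorem lt_mul_simpleRefl_of_alphaCell_general {n : ℕ} (w : Equiv.Perm (Fin n)) (i j : ℕ)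
    (h : alphaCell w i j) :
    len w < len (w * simpleRefl n i) ∧ act w i < act w (i + 1) := by
  obtain ⟨hadd, hijn, hmin⟩ := h
  have hi : 1 ≤ i := hadd.1
  have hin : i < n := by have := hadd.2.1; omega
  have hwi : act w i = j := hadd.act_eq (by omega)
  have hlt : act w i < act w (i + 1) := by
    by_contra! hle
    have hne : act w (i + 1) ≠ act w i := fun he => by
      have := eq_of_act_eq w (by omega) hin hi hin.le he
      omega
    have hk : 1 ≤ act w (i + 1) := one_le_act w (by omega)
    have hj : 1 < j := by omega
    have hdom : (i, j - 1) ∈ domP w := hadd.2.2.2.2 hj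
    have := hmin _ _ (addableP_succ_act hi hin hdom (by omega)) (by omega)
    omega
  exact ⟨len_lt_len_mul_simpleRefl w hi hin hlt, hlt⟩

/-- Lemma 5.1(1): if `w ≠ w₀` and `(i,j)` is an addable cell of `dom(w)` with
`j = α(w)`, then `w < w s_i`, i.e., `w(i) < w(i+1)`. -/
theorem lt_mul_simpleRefl_of_alphaCell {n : ℕ} (w : Equiv.Perm (Fin n)) (i j : ℕ)
    (hw : w ≠ longest n) (h : alphaCell w i j) :
    len w < len (w * simpleRefl n i) ∧ act w i < act w (i + 1) :=
  lt_mul_simpleRefl_of_alphaCell_general w i j h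
end
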